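/- Let $f(x)=\sum_{k=0}^\infty c_k x^k$ be a power series with nonnegative coefficients and radius of convergence $r$, and define $\partial f(x)=\sum_{k=0}^\infty c_{k+1}x^k$. Let $G$ be a finite directed weighted graph without loops with adjacency matrix $A$, and $V=B^{\circ 1/2}$ the entrywise square root of its Hashimoto matrix. Then for $|t|<r/\rho(V)$, $\sum_{k=0}^\infty c_k t^k p_k(A) = c_0 I + t\,L^T\sqrt{Z}\,\partial f(tV)\,\sqrt{Z}\,R$, where $\partial f(tV)=\sum_{k=0}^\infty c_{k+1}t^kV^k$. -/

import Mathlib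

open Matrix

/-- The `m × n` incidence matrix associated with an endpoint map `f` on edge labels. -/
def incMat {n m : ℕ} (f : Fin m → Fin n) : Matrix (Fin m) (Fin n) ℝ :=
  Matrix.of fun e j => if f e = j then (1 : ℝ) else 0

/-- Entrywise (nonnegative) square root of a real matrix. -/
noncomputable def esqrt {α : Type*} (M : Matrix α α ℝ) : Matrix α α ℝ :=
  Matrix.of fun i j => Real.sqrt (M i j)

/-- The spectral radius of a real matrix: the supremum of the absolute values of its
complex eigenvalues. -/
noncomputable def specRad {m : ℕ} (V : Matrix (Fin m) (Fin m) ℝ) : ℝ :=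
  sSup {x : ℝ | ∃ μ ∈ spectrum ℂ (V.map Complex.ofReal), x = ‖μ‖}

open scoped Classical in
/-- `pMat A k` is the matrix whose `(i,j)` entry is the weighted sum over all
nonbacktracking walks of length `k` from node `i` to node `j` (the weight of a walk
being the product of the entries of `A` along its steps; node sequences that do not
follow edges of the graph contribute zero), with `pMat A 0 = I`. -/
noncomputable def pMat {n : ℕ} (A : Matrix (Fin n) (Fin n) ℝ) : ℕ → Matrix (Fin n) (Fin n) ℝ
  | 0 => 1
  | Nat.succ k => Matrix.of fun i j =>
      ∑ v ∈ Finset.univ.filter (fun v : Fin (k + 2) → Fin n =>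
          v 0 = i ∧ v (Fin.last (k + 1)) = j ∧
          ∀ t : Fin k, v t.castSucc.castSucc ≠ v t.succ.succ),
        ∏ t : Fin (k + 1), A (v t.castSucc) (v t.succ)

/-!
Expanding `V ^ k` as a sum over edge sequences `e₀, …, e_k` of `∏ V (e_s) (e_{s+1})`, the entry
`V e f = √(w e * w f)` is nonzero exactly when `f` continues `e` without backtracking, so each
product telescopes against the outer factors `√w` to `∏ w (e_s)`. Hence `(Lᵀ √Z V^k √Z R) i j`
is the weighted count of nonbacktracking walks of length `k + 1` from `i` to `j`, which is
`pMat A (k + 1) i j` because an edge is determined by its endpoints. The series identity then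
follows termwise once `∑ c_{k+1} t^k V^k` converges entrywise: by Gelfand's formula
`|(V ^ k) e f| ≤ x ^ k` eventually for every `x > ρ(V)`, and for `|t| x < r` the series is
dominated by `∑ c_{k+1} (|t| x)^k`.
-/

section Paths
variable {ι R : Type*} [Fintype ι] [DecidableEq ι] [CommSemiring R]

theorem dotProduct_pow_mulVec_eq_sum_paths (V : Matrix ι ι R) (a b : ι → R) (k : ℕ) :
    a ⬝ᵥ (V ^ k *ᵥ b) = ∑ E : Fin (k + 1) → ι,
      a (E 0) * (∏ s : Fin k, V (E s.castSucc) (E s.succ)) * b (E (Fin.last k)) := by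
  induction k generalizing a with
  | zero =>
    rw [pow_zero, one_mulVec]
    exact Fintype.sum_equiv (Equiv.funUnique (Fin 1) ι).symm _ _ (by simp)
  | succ k ih =>
    rw [pow_succ', ← mulVec_mulVec, dotProduct_mulVec, ih,
      ← (Fin.consEquiv fun _ : Fin (k + 2) => ι).sum_comp, Fintype.sum_prod_type, Finset.sum_comm]
    refine Finset.sum_congr rfl fun E _ => ?_
    simp only [vecMul, dotProduct, Finset.sum_mul, Fin.consEquiv_apply, Fin.prod_univ_succ,
      Fin.cons_zero, Fin.castSucc_zero, Fin.cons_succ, ← Fin.succ_castSucc, ← Fin.succ_last]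
    refine Finset.sum_congr rfl fun e _ => ?_
    ring

end Paths

theorem Fin.mul_prod_mul_mul_eq_prod_mul_prod {M : Type*} [CommMonoid M] {k : ℕ}
    (g : Fin (k + 1) → M) :
    g 0 * (∏ s : Fin k, g s.castSucc * g s.succ) * g (Fin.last k) = (∏ u, g u) * ∏ u, g u := by
  calc g 0 * (∏ s : Fin k, g s.castSucc * g s.succ) * g (Fin.last k)
      = (g 0 * ∏ s : Fin k, g s.succ) * ((∏ s : Fin k, g s.castSucc) * g (Fin.last k)) := by
        rw [Finset.prod_mul_distrib]; ac_rfl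
    _ = (∏ u, g u) * ∏ u, g u := by rw [← Fin.prod_univ_succ, ← Fin.prod_univ_castSucc]

section MatrixSums

variable {ι l m n R : Type*} [Fintype m] [Semiring R] [TopologicalSpace R]
  [IsTopologicalSemiring R]

theorem HasSum.matrix_mul_left {f : ι → Matrix m n R} {a : Matrix m n R} (hf : HasSum f a)
    (X : Matrix l m R) : HasSum (fun i => X * f i) (X * a) :=
  hf.map (addMonoidHomMulLeft X) (continuous_const.matrix_mul continuous_id)

theorem HasSum.matrix_mul_right {f : ι → Matrix l m R} {a : Matrix l m R} (hf : HasSum f a)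
    (Y : Matrix m n R) : HasSum (fun i => f i * Y) (a * Y) :=
  hf.map (addMonoidHomMulRight Y) (continuous_id.matrix_mul continuous_const)

end MatrixSums

section SpectralRadius

open Filter

-- Gelfand's formula needs a Banach-algebra norm on complex matrices; the ℓ∞ operator norm is one
-- that also dominates every entry.
attribute [local instance] Matrix.linftyOpSeminormedAddCommGroup Matrix.linftyOpNormedRing
  Matrix.linftyOpNormedAlgebra

variable {m : ℕ}

theorem specRad_nonneg (V : Matrix (Fin m) (Fin m) ℝ) : 0 ≤ specRad V :=
  Real.sSup_nonneg (by rintro _ ⟨μ, -, rfl⟩; exact norm_nonneg μ)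

theorem spectralRadius_map_ofReal_le_specRad (V : Matrix (Fin m) (Fin m) ℝ) :
    spectralRadius ℂ (V.map Complex.ofReal) ≤ ENNReal.ofReal (specRad V) := by
  have hbdd : BddAbove {x : ℝ | ∃ μ ∈ spectrum ℂ (V.map Complex.ofReal), x = ‖μ‖} := by
    simpa only [Set.image, eq_comm] using
      (spectrum.isCompact (V.map Complex.ofReal)).bddAbove_image continuous_norm.continuousOn
  exact iSup₂_le fun μ hμ =>
    (ofReal_norm μ).symm.trans_le (ENNReal.ofReal_le_ofReal (le_csSup hbdd ⟨μ, hμ, rfl⟩))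

theorem norm_entry_le_linfty_opNorm {α : Type*} [SeminormedAddCommGroup α]
    (M : Matrix (Fin m) (Fin m) α) (a b : Fin m) : ‖M a b‖ ≤ ‖M‖ := by
  have hrow : ‖M a b‖₊ ≤ ∑ j, ‖M a j‖₊ :=
    Finset.single_le_sum (f := fun j => ‖M a j‖₊) (fun _ _ => zero_le) (Finset.mem_univ b)
  have hsup : ∑ j, ‖M a j‖₊ ≤ ‖M‖₊ := by
    rw [Matrix.linfty_opNNNorm_def]
    exact Finset.le_sup (f := fun i => ∑ j, ‖M i j‖₊) (Finset.mem_univ a)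
  exact_mod_cast hrow.trans hsup

theorem eventually_norm_pow_le_pow {A : Type*} [NormedRing A] [NormedAlgebra ℂ A]
    [CompleteSpace A] (a : A) {x : ℝ} (hx : spectralRadius ℂ a < ENNReal.ofReal x) :
    ∀ᶠ k : ℕ in atTop, ‖a ^ k‖ ≤ x ^ k := by
  filter_upwards [(spectrum.pow_norm_pow_one_div_tendsto_nhds_spectralRadius a).eventually_lt_const
    hx, eventually_gt_atTop 0] with k hk hk0
  obtain ⟨hlt, hx0⟩ := ENNReal.ofReal_lt_ofReal_iff'.1 hk
  rw [one_div, Real.rpow_inv_lt_iff_of_pos (norm_nonneg _) hx0.le (by positivity),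
    Real.rpow_natCast] at hlt
  exact hlt.le

theorem eventually_abs_pow_apply_le (V : Matrix (Fin m) (Fin m) ℝ) {x : ℝ} (hx : specRad V < x) :
    ∀ᶠ k : ℕ in atTop, ∀ e f, |(V ^ k) e f| ≤ x ^ k := by
  have hρ : spectralRadius ℂ (V.map Complex.ofReal) < ENNReal.ofReal x :=
    (spectralRadius_map_ofReal_le_specRad V).trans_lt
      (ENNReal.ofReal_lt_ofReal_iff'.2 ⟨hx, (specRad_nonneg V).trans_lt hx⟩)
  filter_upwards [eventually_norm_pow_le_pow _ hρ] with k hk e f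
  have hpow : (V.map Complex.ofReal) ^ k = (V ^ k).map Complex.ofReal :=
    (Matrix.map_pow V Complex.ofRealHom k).symm
  calc |(V ^ k) e f| = ‖((V.map Complex.ofReal) ^ k) e f‖ := by simp [hpow]
    _ ≤ ‖(V.map Complex.ofReal) ^ k‖ := norm_entry_le_linfty_opNorm _ e f
    _ ≤ x ^ k := hk

end SpectralRadius

section PowerSeries

open Filter

variable {c : ℕ → ℝ} {r : ℝ}

theorem summable_coeff_succ_mul_pow (hr : ∀ x : ℝ, |x| < r → Summable (fun k : ℕ => c k * x ^ k))
    {y : ℝ} (hy : 0 ≤ y) (hyr : y < r) : Summable fun k : ℕ => c (k + 1) * y ^ k := by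
  rcases hy.eq_or_lt with rfl | hy
  · exact summable_of_ne_finset_zero (s := {0}) fun k hk => by simp [zero_pow (by simpa using hk)]
  have hshift := (summable_nat_add_iff 1).2 (hr y (by rwa [abs_of_pos hy]))
  refine (hshift.mul_right y⁻¹).congr fun k => ?_
  field_simp
  ring

theorem summable_coeff_succ_mul_pow_mul (hc : ∀ k, 0 ≤ c k)
    (hr : ∀ x : ℝ, |x| < r → Summable (fun k : ℕ => c k * x ^ k)) {t x : ℝ} (hx : 0 ≤ x)
    (htx : |t| * x < r) {u : ℕ → ℝ} (hu : ∀ᶠ k in atTop, |u k| ≤ x ^ k) :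
    Summable fun k : ℕ => c (k + 1) * t ^ k * u k := by
  refine (summable_coeff_succ_mul_pow hr (by positivity) htx).of_norm_bounded_eventually_nat ?_
  filter_upwards [hu] with k hk
  rw [Real.norm_eq_abs, abs_mul, abs_mul, abs_pow, abs_of_nonneg (hc _), mul_pow, mul_assoc]
  have := hc (k + 1)
  gcongr

end PowerSeries

theorem transpose_incMat_mul_diagonal_mul_mul_apply {n m : ℕ} (src tgt : Fin m → Fin n)
    (d : Fin m → ℝ) (M : Matrix (Fin m) (Fin m) ℝ) (i j : Fin n) :
    ((incMat src)ᵀ * diagonal d * M * diagonal d * incMat tgt) i j =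
      (fun e => if src e = i then d e else 0) ⬝ᵥ (M *ᵥ fun f => if tgt f = j then d f else 0) := by
  simp only [Matrix.mul_apply, dotProduct, mulVec, incMat, transpose_apply, of_apply,
    diagonal_apply, Finset.sum_mul, Finset.mul_sum, ite_mul, mul_ite, one_mul, zero_mul, mul_zero,
    mul_one, Finset.sum_ite_eq', Finset.mem_univ, if_true]
  rw [Finset.sum_comm]
  refine Finset.sum_congr rfl fun f _ => ?_
  split_ifs <;> simp [mul_assoc]

section EdgeWalks

variable {n m : ℕ} {src tgt : Fin m → Fin n} {w : Fin m → ℝ}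

def IsNonbacktrackingEdgeWalk (src tgt : Fin m → Fin n) (i j : Fin n) {k : ℕ}
    (E : Fin (k + 1) → Fin m) : Prop :=
  src (E 0) = i ∧ tgt (E (Fin.last k)) = j ∧
    ∀ s : Fin k, tgt (E s.castSucc) = src (E s.succ) ∧ tgt (E s.succ) ≠ src (E s.castSucc)

instance {i j : Fin n} {k : ℕ} :
    DecidablePred (IsNonbacktrackingEdgeWalk (k := k) src tgt i j) := fun _ => by
  unfold IsNonbacktrackingEdgeWalk; infer_instance

theorem esqrt_apply_of_hashimoto (hw : ∀ e, 0 < w e) {W : Matrix (Fin m) (Fin m) ℝ}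
    (hW : ∀ e f, W e f = if tgt e = src f then w e * w f else 0)
    {B : Matrix (Fin m) (Fin m) ℝ} (hB : ∀ e f, B e f = if W e f * W f e = 0 then W e f else 0)
    (e f : Fin m) :
    esqrt B e f = if tgt e = src f ∧ tgt f ≠ src e then √(w e) * √(w f) else 0 := by
  rw [esqrt, of_apply, hB, hW e f, hW f e]
  by_cases hef : tgt e = src f <;> by_cases hfe : tgt f = src e <;>
    simp [hef, hfe, (hw e).ne', (hw f).ne', Real.sqrt_mul (hw e).le]

theorem sqrt_mul_prod_esqrt_mul_sqrt (hw : ∀ e, 0 < w e) {W : Matrix (Fin m) (Fin m) ℝ}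
    (hW : ∀ e f, W e f = if tgt e = src f then w e * w f else 0)
    {B : Matrix (Fin m) (Fin m) ℝ} (hB : ∀ e f, B e f = if W e f * W f e = 0 then W e f else 0)
    (i j : Fin n) {k : ℕ} (E : Fin (k + 1) → Fin m) :
    (if src (E 0) = i then √(w (E 0)) else 0) *
        (∏ s : Fin k, esqrt B (E s.castSucc) (E s.succ)) *
        (if tgt (E (Fin.last k)) = j then √(w (E (Fin.last k))) else 0) =
      if IsNonbacktrackingEdgeWalk src tgt i j E then ∏ u, w (E u) else 0 := by
  simp_rw [esqrt_apply_of_hashimoto hw hW hB, Finset.prod_ite_zero]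
  by_cases hE : IsNonbacktrackingEdgeWalk src tgt i j E
  · obtain ⟨h0, hlast, hsteps⟩ := hE
    rw [if_pos h0, if_pos hlast, if_pos fun s _ => hsteps s, if_pos ⟨h0, hlast, hsteps⟩,
      Fin.mul_prod_mul_mul_eq_prod_mul_prod (fun u => √(w (E u))), ← Finset.prod_mul_distrib]
    exact Finset.prod_congr rfl fun u _ => Real.mul_self_sqrt (hw (E u)).le
  · rw [if_neg hE]
    simp only [IsNonbacktrackingEdgeWalk, not_and_or] at hE
    rcases hE with h | h | h <;> simp [h]

theorem transpose_incMat_mul_sqrt_mul_esqrt_pow_apply (hw : ∀ e, 0 < w e)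
    {W : Matrix (Fin m) (Fin m) ℝ} (hW : ∀ e f, W e f = if tgt e = src f then w e * w f else 0)
    {B : Matrix (Fin m) (Fin m) ℝ} (hB : ∀ e f, B e f = if W e f * W f e = 0 then W e f else 0)
    (k : ℕ) (i j : Fin n) :
    ((incMat src)ᵀ * diagonal (fun e => √(w e)) * esqrt B ^ k * diagonal (fun e => √(w e)) *
        incMat tgt) i j =
      ∑ E ∈ Finset.univ.filter (IsNonbacktrackingEdgeWalk (k := k) src tgt i j), ∏ u, w (E u) := by
  rw [transpose_incMat_mul_diagonal_mul_mul_apply, dotProduct_pow_mulVec_eq_sum_paths,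
    Finset.sum_filter]
  exact Finset.sum_congr rfl fun E _ => sqrt_mul_prod_esqrt_mul_sqrt hw hW hB i j E

end EdgeWalks

section VertexWalks

variable {n m : ℕ} {src tgt : Fin m → Fin n} {w : Fin m → ℝ}

def edgeWalkVertices (src tgt : Fin m → Fin n) {k : ℕ} (E : Fin (k + 1) → Fin m) :
    Fin (k + 2) → Fin n :=
  Fin.snoc (fun s => src (E s)) (tgt (E (Fin.last k)))

theorem edgeWalkVertices_castSucc {k : ℕ} (E : Fin (k + 1) → Fin m) (u : Fin (k + 1)) :
    edgeWalkVertices src tgt E u.castSucc = src (E u) :=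
  Fin.snoc_castSucc ..

theorem IsNonbacktrackingEdgeWalk.vertices_succ {i j : Fin n} {k : ℕ} {E : Fin (k + 1) → Fin m}
    (hE : IsNonbacktrackingEdgeWalk src tgt i j E) (u : Fin (k + 1)) :
    edgeWalkVertices src tgt E u.succ = tgt (E u) := by
  induction u using Fin.lastCases with
  | last => rw [Fin.succ_last, edgeWalkVertices, Fin.snoc_last]
  | cast s => rw [Fin.succ_castSucc, edgeWalkVertices_castSucc, (hE.2.2 s).1]

theorem pMat_succ_apply (hinj : Function.Injective fun e => (src e, tgt e))
    (A : Matrix (Fin n) (Fin n) ℝ) (hA : ∀ e, A (src e) (tgt e) = w e)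
    (hA0 : ∀ i j, (∀ e, ¬(src e = i ∧ tgt e = j)) → A i j = 0) (k : ℕ) (i j : Fin n) :
    pMat A (k + 1) i j =
      ∑ E ∈ Finset.univ.filter (IsNonbacktrackingEdgeWalk (k := k) src tgt i j), ∏ u, w (E u) := by
  rw [pMat, of_apply]
  symm
  refine Finset.sum_bij_ne_zero (fun E _ _ => edgeWalkVertices src tgt E) ?_ ?_ ?_ ?_
  · intro E hE _
    simp only [Finset.mem_filter, Finset.mem_univ, true_and] at hE ⊢
    refine ⟨?_, ?_, fun s => ?_⟩
    · rw [← Fin.castSucc_zero, edgeWalkVertices_castSucc]; exact hE.1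
    · rw [← Fin.succ_last, hE.vertices_succ]; exact hE.2.1
    · rw [edgeWalkVertices_castSucc, hE.vertices_succ]; exact (hE.2.2 s).2.symm
  · intro E₁ h₁ _ E₂ h₂ _ h
    simp only [Finset.mem_filter, Finset.mem_univ, true_and] at h₁ h₂
    funext u
    refine hinj (Prod.ext ?_ ?_)
    · simpa only [edgeWalkVertices_castSucc] using congrFun h u.castSucc
    · simpa only [h₁.vertices_succ, h₂.vertices_succ] using congrFun h u.succ
  · intro v hv hprod
    simp only [Finset.mem_filter, Finset.mem_univ, true_and] at hv
    obtain ⟨h0, hlast, hnb⟩ := hv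
    have hedge : ∀ t : Fin (k + 1), ∃ e, src e = v t.castSucc ∧ tgt e = v t.succ := by
      intro t
      by_contra! h
      exact hprod (Finset.prod_eq_zero (Finset.mem_univ t) (hA0 _ _ fun e he => h e he.1 he.2))
    choose E hsrc htgt using hedge
    have hE : IsNonbacktrackingEdgeWalk src tgt i j E := by
      refine ⟨by rw [hsrc, Fin.castSucc_zero, h0], by rw [htgt, Fin.succ_last, hlast],
        fun s => ⟨by rw [htgt, hsrc, Fin.succ_castSucc], ?_⟩⟩
      rw [htgt, hsrc]
      exact (hnb s).symm
    refine ⟨E, by simpa using hE, by simpa only [← hA, hsrc, htgt] using hprod, ?_⟩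
    funext u
    induction u using Fin.lastCases with
    | last => rw [← Fin.succ_last, hE.vertices_succ, htgt]
    | cast s => rw [edgeWalkVertices_castSucc, hsrc]
  · intro E hE _
    simp only [Finset.mem_filter, Finset.mem_univ, true_and] at hE
    refine Finset.prod_congr rfl fun t _ => ?_
    rw [edgeWalkVertices_castSucc, hE.vertices_succ, hA]

end VertexWalks

open Filter Topology in
theorem summable_coeff_succ_mul_pow_mul_pow_apply {m : ℕ} (V : Matrix (Fin m) (Fin m) ℝ)
    {c : ℕ → ℝ} (hc : ∀ k, 0 ≤ c k) {r : ℝ}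
    (hr : ∀ x : ℝ, |x| < r → Summable (fun k : ℕ => c k * x ^ k)) {t : ℝ}
    (ht : |t| * specRad V < r) (e f : Fin m) :
    Summable fun k : ℕ => c (k + 1) * t ^ k * (V ^ k) e f := by
  obtain ⟨x, htx, hρx⟩ : ∃ x, |t| * x < r ∧ specRad V < x :=
    ((((continuous_const.mul continuous_id).tendsto _).eventually (gt_mem_nhds ht)).filter_mono
      nhdsWithin_le_nhds |>.and self_mem_nhdsWithin).exists (f := 𝓝[>] specRad V)
  exact summable_coeff_succ_mul_pow_mul hc hr ((specRad_nonneg V).trans hρx.le) htx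
    ((eventually_abs_pow_apply_le V hρx).mono fun k hk => hk e f)

theorem pMat_succ_eq {n m : ℕ} {src tgt : Fin m → Fin n} {w : Fin m → ℝ} (hw : ∀ e, 0 < w e)
    (hinj : Function.Injective fun e => (src e, tgt e))
    (A : Matrix (Fin n) (Fin n) ℝ) (hA : ∀ e, A (src e) (tgt e) = w e)
    (hA0 : ∀ i j, (∀ e, ¬(src e = i ∧ tgt e = j)) → A i j = 0)
    {W : Matrix (Fin m) (Fin m) ℝ} (hW : ∀ e f, W e f = if tgt e = src f then w e * w f else 0)
    {B : Matrix (Fin m) (Fin m) ℝ} (hB : ∀ e f, B e f = if W e f * W f e = 0 then W e f else 0)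
    (k : ℕ) :
    pMat A (k + 1) = (incMat src)ᵀ * diagonal (fun e => √(w e)) * esqrt B ^ k *
      diagonal (fun e => √(w e)) * incMat tgt := by
  ext i j
  rw [pMat_succ_apply hinj A hA hA0, transpose_incMat_mul_sqrt_mul_esqrt_pow_apply hw hW hB]

theorem stmt12_general {n m : ℕ} (src tgt : Fin m → Fin n) (w : Fin m → ℝ)
    (hw : ∀ e, 0 < w e)
    (hinj : Function.Injective fun e => (src e, tgt e))
    (A : Matrix (Fin n) (Fin n) ℝ)
    (hA : ∀ e, A (src e) (tgt e) = w e)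
    (hA0 : ∀ i j, (∀ e, ¬(src e = i ∧ tgt e = j)) → A i j = 0)
    (W : Matrix (Fin m) (Fin m) ℝ)
    (hW : ∀ e f, W e f = if tgt e = src f then w e * w f else 0)
    (B : Matrix (Fin m) (Fin m) ℝ)
    (hB : ∀ e f, B e f = if W e f * W f e = 0 then W e f else 0)
    (c : ℕ → ℝ) (hc : ∀ k, 0 ≤ c k) (r : ℝ)
    (hr : ∀ x : ℝ, |x| < r → Summable (fun k : ℕ => c k * x ^ k))
    (t : ℝ) (ht : |t| * specRad (esqrt B) < r) :
    ∀ i j, HasSum (fun k : ℕ => c k * t ^ k * pMat A k i j)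
      ((c 0 • (1 : Matrix (Fin n) (Fin n) ℝ) +
        t • ((incMat src)ᵀ * Matrix.diagonal (fun e => Real.sqrt (w e)) *
          (Matrix.of fun e f => ∑' k : ℕ, c (k + 1) * t ^ k * ((esqrt B) ^ k) e f) *
          Matrix.diagonal (fun e => Real.sqrt (w e)) * incMat tgt)) i j) := by
  set D := diagonal fun e => √(w e)
  set S := Matrix.of fun e f => ∑' k : ℕ, c (k + 1) * t ^ k * (esqrt B ^ k) e f
  have hS : HasSum (fun k : ℕ => (c (k + 1) * t ^ k) • esqrt B ^ k) S :=
    Pi.hasSum.2 fun e => Pi.hasSum.2 fun f =>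
      (summable_coeff_succ_mul_pow_mul_pow_apply (esqrt B) hc hr ht e f).hasSum
  have hsucc : HasSum (fun k : ℕ => (c (k + 1) * t ^ (k + 1)) • pMat A (k + 1))
      (t • ((incMat src)ᵀ * D * S * D * incMat tgt)) := by
    convert (((hS.matrix_mul_left ((incMat src)ᵀ * D)).matrix_mul_right D).matrix_mul_right
      (incMat tgt)).const_smul t using 2 with k
    rw [pMat_succ_eq hw hinj A hA hA0 hW hB, Matrix.mul_smul, Matrix.smul_mul, Matrix.smul_mul,
      smul_smul, pow_succ, mul_comm t, mul_assoc]
  have hall : HasSum (fun k : ℕ => (c k * t ^ k) • pMat A k)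
      (c 0 • 1 + t • ((incMat src)ᵀ * D * S * D * incMat tgt)) := by
    have hp0 : pMat A 0 = 1 := rfl
    rw [← hasSum_nat_add_iff' 1, Finset.sum_range_one, pow_zero, mul_one, hp0,
      add_sub_cancel_left]
    exact hsucc
  intro i j
  exact Pi.hasSum.1 (Pi.hasSum.1 hall i) j

/-- let `f(x) = ∑ c_k x^k` have nonnegative coefficients and radius of
convergence (at least) `r`, and let `V = B^{∘1/2}`.  For `|t| < r / ρ(V)`,
`∑_{k≥0} c_k t^k p_k(A) = c_0 I + t Lᵀ √Z ∂f(tV) √Z R`, where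
`∂f(tV) = ∑_{k≥0} c_{k+1} t^k V^k`. -/
theorem stmt12 {n m : ℕ} (src tgt : Fin m → Fin n) (w : Fin m → ℝ)
    (hw : ∀ e, 0 < w e)
    (hinj : Function.Injective fun e => (src e, tgt e))
    (hloop : ∀ e, src e ≠ tgt e)
    (A : Matrix (Fin n) (Fin n) ℝ)
    (hA : ∀ e, A (src e) (tgt e) = w e)
    (hA0 : ∀ i j, (∀ e, ¬(src e = i ∧ tgt e = j)) → A i j = 0)
    (W : Matrix (Fin m) (Fin m) ℝ)
    (hW : ∀ e f, W e f = if tgt e = src f then w e * w f else 0)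
    (B : Matrix (Fin m) (Fin m) ℝ)
    (hB : ∀ e f, B e f = if W e f * W f e = 0 then W e f else 0)
    (c : ℕ → ℝ) (hc : ∀ k, 0 ≤ c k) (r : ℝ)
    (hr : ∀ x : ℝ, |x| < r → Summable (fun k : ℕ => c k * x ^ k))
    (t : ℝ) (ht : |t| * specRad (esqrt B) < r) :
    ∀ i j, HasSum (fun k : ℕ => c k * t ^ k * pMat A k i j)
      ((c 0 • (1 : Matrix (Fin n) (Fin n) ℝ) +
        t • ((incMat src)ᵀ * Matrix.diagonal (fun e => Real.sqrt (w e)) *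
          (Matrix.of fun e f => ∑' k : ℕ, c (k + 1) * t ^ k * ((esqrt B) ^ k) e f) *
          Matrix.diagonal (fun e => Real.sqrt (w e)) * incMat tgt)) i j) :=
  stmt12_general src tgt w hw hinj A hA hA0 W hW B hB c hc r hr t ht
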